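/- arXiv:1711.03075 — 6 statements merged into one kernel-verified Lean document; each statement's English description precedes it below -/
import Mathlib

section
/- Any nonzero solution φ: [-a,a] → ℝ of φ'' + λφ = 0 with λ = α² > 0 satisfying φ'(a) = σφ(a) and -φ'(-a) = σφ(-a) for some σ ≥ 0 is a constant multiple of either sin(αt) (with σ = α·cot(αa)) or cos(αt) (with σ = -α·tan(αa)). -/
/-! By uniqueness for the linear system `(φ, φ')' = (φ', -α²φ)`, on `[-a, a]` the solution is
`φ t = P cos (α t) + Q sin (α t)`. Adding and subtracting the two boundary conditions separates
the even and the odd part: `P (α sin αa + σ cos αa) = 0` and `Q (α cos αa - σ sin αa) = 0`.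
The two brackets cannot both vanish, since `sin αa` times the first plus `cos αa` times the
second is `α ≠ 0`; hence exactly one of `P`, `Q` is nonzero, and the other bracket determines `σ`.
-/

open Real Set

noncomputable def oscillator (α A B t : ℝ) : ℝ := A * cos (α * t) + B * sin (α * t)

@[simp]
lemma oscillator_zero (α A B : ℝ) : oscillator α A B 0 = A := by
  simp [oscillator]

lemma hasDerivAt_oscillator (α A B t : ℝ) :
    HasDerivAt (oscillator α A B) (oscillator α (α * B) (-(α * A)) t) t := by
  have hαt : HasDerivAt (fun t => α * t) α t := by simpa using (hasDerivAt_id t).const_mul α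
  refine ((hαt.cos.const_mul A).add (hαt.sin.const_mul B)).congr_deriv ?_
  rw [oscillator]
  ring

lemma oscillator_mul_neg_mul (α A B t : ℝ) :
    oscillator α (α * -(α * A)) (-(α * (α * B))) t = -(α ^ 2) * oscillator α A B t := by
  simp only [oscillator]
  ring

lemma eqOn_oscillator_of_hasDerivAt {f f' : ℝ → ℝ} {α A B a b t₀ : ℝ} (ht₀ : t₀ ∈ Ioo a b)
    (hf : ContinuousOn f (Icc a b)) (hf' : ContinuousOn f' (Icc a b))
    (hderiv : ∀ t ∈ Ioo a b, HasDerivAt f (f' t) t)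
    (hderiv' : ∀ t ∈ Ioo a b, HasDerivAt f' (-(α ^ 2) * f t) t)
    (hA : f t₀ = A) (hB : f' t₀ = α * B) :
    EqOn (fun t => (f t, f' t))
      (fun t => (oscillator α A B (t - t₀), oscillator α (α * B) (-(α * A)) (t - t₀)))
      (Icc a b) := by
  set L : ℝ × ℝ →L[ℝ] ℝ × ℝ :=
    (ContinuousLinearMap.snd ℝ ℝ ℝ).prod (-(α ^ 2) • ContinuousLinearMap.fst ℝ ℝ ℝ)
  have hL (p : ℝ × ℝ) : L p = (p.2, -(α ^ 2) * p.1) := by simp [L]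
  have hg (t : ℝ) : HasDerivAt (fun t => (oscillator α A B (t - t₀),
      oscillator α (α * B) (-(α * A)) (t - t₀))) (L (oscillator α A B (t - t₀),
      oscillator α (α * B) (-(α * A)) (t - t₀))) t := by
    rw [hL, ← oscillator_mul_neg_mul]
    exact ((hasDerivAt_oscillator α A B _).comp_sub_const t t₀).prodMk
      ((hasDerivAt_oscillator α _ _ _).comp_sub_const t t₀)
  exact ODE_solution_unique_of_mem_Icc (v := fun _ => L) (s := fun _ => univ)
    (fun _ _ => L.lipschitz.lipschitzOnWith) ht₀ (hf.prodMk hf')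
    (fun t ht => by simpa [hL] using (hderiv t ht).prodMk (hderiv' t ht)) (fun _ _ => trivial)
    (HasDerivAt.continuousOn fun t _ => hg t) (fun t _ => hg t) (fun _ _ => trivial)
    (by simp [hA, hB])

lemma mul_eq_zero_of_robin_oscillator {α σ A B x : ℝ}
    (hright : oscillator α (α * B) (-(α * A)) x = σ * oscillator α A B x)
    (hleft : -oscillator α (α * B) (-(α * A)) (-x) = σ * oscillator α A B (-x)) :
    A * (α * sin (α * x) + σ * cos (α * x)) = 0 ∧
      B * (α * cos (α * x) - σ * sin (α * x)) = 0 := by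
  simp only [oscillator, mul_neg, cos_neg, sin_neg] at hright hleft
  constructor
  · linear_combination (-1 / 2 : ℝ) * (hright + hleft)
  · linear_combination (1 / 2 : ℝ) * (hright - hleft)

lemma eq_mul_cot_of_mul_cos_eq {α σ θ : ℝ} (hα : α ≠ 0) (h : α * cos θ = σ * sin θ) :
    σ = α * cot θ := by
  have hs : sin θ ≠ 0 := by
    intro hs
    have hc : cos θ = 0 := by simpa [hs, hα] using h
    simpa [hs, hc] using sin_sq_add_cos_sq θ
  rw [cot_eq_cos_div_sin]
  field_simp
  linarith

lemma eq_neg_mul_tan_of_mul_sin_add_eq_zero {α σ θ : ℝ} (hα : α ≠ 0)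
    (h : α * sin θ + σ * cos θ = 0) : σ = -(α * tan θ) := by
  have hc : cos θ ≠ 0 := by
    intro hc
    have hs : sin θ = 0 := by simpa [hc, hα] using h
    simpa [hs, hc] using sin_sq_add_cos_sq θ
  rw [tan_eq_sin_div_cos]
  field_simp
  linarith

lemma robin_trig_cases {α σ θ P Q : ℝ} (hα : α ≠ 0)
    (hP : P * (α * sin θ + σ * cos θ) = 0) (hQ : Q * (α * cos θ - σ * sin θ) = 0)
    (hPQ : P ≠ 0 ∨ Q ≠ 0) :
    (P = 0 ∧ Q ≠ 0 ∧ σ = α * cot θ) ∨ (Q = 0 ∧ P ≠ 0 ∧ σ = -(α * tan θ)) := by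
  rcases eq_or_ne P 0 with hP0 | hP0
  · have hQ0 : Q ≠ 0 := hPQ.resolve_left (not_not.2 hP0)
    have hcos := (mul_eq_zero.1 hQ).resolve_left hQ0
    exact .inl ⟨hP0, hQ0, eq_mul_cot_of_mul_cos_eq hα (by linarith)⟩
  · have hsin := (mul_eq_zero.1 hP).resolve_left hP0
    have hQ0 : Q = 0 := by
      by_contra hQ0
      have hcos := (mul_eq_zero.1 hQ).resolve_left hQ0
      exact hα (by linear_combination sin θ * hsin + cos θ * hcos - α * sin_sq_add_cos_sq θ)
    exact .inr ⟨hQ0, hP0, eq_neg_mul_tan_of_mul_sin_add_eq_zero hα hsin⟩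

theorem stmt3_general (a α σ : ℝ) (ha : 0 < a) (hα : 0 < α)
    (φ : ℝ → ℝ) (hsmooth : ContDiff ℝ 2 φ)
    (hode : ∀ t ∈ Set.Icc (-a) a, deriv (deriv φ) t + α ^ 2 * φ t = 0)
    (hbc1 : deriv φ a = σ * φ a)
    (hbc2 : -(deriv φ (-a)) = σ * φ (-a))
    (hne : ∃ t ∈ Set.Icc (-a) a, φ t ≠ 0) :
    ∃ c : ℝ, c ≠ 0 ∧
      (((∀ t ∈ Set.Icc (-a) a, φ t = c * Real.sin (α * t)) ∧
          σ = α * Real.cot (α * a)) ∨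
       ((∀ t ∈ Set.Icc (-a) a, φ t = c * Real.cos (α * t)) ∧
          σ = -(α * Real.tan (α * a)))) := by
  rw [show (2 : WithTop ℕ∞) = 1 + 1 from rfl, contDiff_succ_iff_deriv] at hsmooth
  obtain ⟨hφ, -, hφ'⟩ := hsmooth
  have hφ'' := hφ'.differentiable one_ne_zero
  set P := φ 0
  set Q := deriv φ 0 / α
  have hφ'_deriv (t : ℝ) (ht : t ∈ Ioo (-a) a) : HasDerivAt (deriv φ) (-(α ^ 2) * φ t) t :=
    (hφ'' t).hasDerivAt.congr_deriv (by linarith [hode t (Ioo_subset_Icc_self ht)])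
  have hsol : ∀ t ∈ Icc (-a) a,
      φ t = oscillator α P Q t ∧ deriv φ t = oscillator α (α * Q) (-(α * P)) t := by
    intro t ht
    simpa using Prod.ext_iff.1 (eqOn_oscillator_of_hasDerivAt (t₀ := 0) ⟨neg_lt_zero.2 ha, ha⟩
      hφ.continuous.continuousOn hφ''.continuous.continuousOn (fun t _ => (hφ t).hasDerivAt)
      hφ'_deriv rfl (by simp only [Q]; field_simp) ht)
  obtain ⟨hφa, hφ'a⟩ := hsol a ⟨by linarith, le_rfl⟩
  obtain ⟨hφna, hφ'na⟩ := hsol (-a) ⟨le_rfl, by linarith⟩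
  obtain ⟨hP, hQ⟩ := mul_eq_zero_of_robin_oscillator (hφ'a ▸ hφa ▸ hbc1) (hφ'na ▸ hφna ▸ hbc2)
  have hPQ : P ≠ 0 ∨ Q ≠ 0 := by
    obtain ⟨t, ht, hφt⟩ := hne
    contrapose! hφt
    simp [(hsol t ht).1, oscillator, hφt.1, hφt.2]
  rcases robin_trig_cases hα.ne' hP hQ hPQ with ⟨hP0, hQ0, hσ⟩ | ⟨hQ0, hP0, hσ⟩
  · exact ⟨Q, hQ0, .inl ⟨fun t ht => by simp [(hsol t ht).1, oscillator, hP0], hσ⟩⟩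
  · exact ⟨P, hP0, .inr ⟨fun t ht => by simp [(hsol t ht).1, oscillator, hQ0], hσ⟩⟩

theorem stmt3 (a α σ : ℝ) (ha : 0 < a) (hα : 0 < α) (hσ : 0 ≤ σ)
    (φ : ℝ → ℝ) (hsmooth : ContDiff ℝ 2 φ)
    (hode : ∀ t ∈ Set.Icc (-a) a, deriv (deriv φ) t + α ^ 2 * φ t = 0)
    (hbc1 : deriv φ a = σ * φ a)
    (hbc2 : -(deriv φ (-a)) = σ * φ (-a))
    (hne : ∃ t ∈ Set.Icc (-a) a, φ t ≠ 0) :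
    ∃ c : ℝ, c ≠ 0 ∧
      (((∀ t ∈ Set.Icc (-a) a, φ t = c * Real.sin (α * t)) ∧
          σ = α * Real.cot (α * a)) ∨
       ((∀ t ∈ Set.Icc (-a) a, φ t = c * Real.cos (α * t)) ∧
          σ = -(α * Real.tan (α * a)))) :=
  stmt3_general a α σ ha hα φ hsmooth hode hbc1 hbc2 hne
end

section
/- Let (a_n) and (b_n) be sequences of positive reals tending to infinity with a_n = b_n + O(b_n^{-s}) for some s > -1, and let N_a(λ) = #{n : a_n < λ}, N_b(λ) = #{n : b_n < λ}. Suppose N_a(λ) = Σ_{k=0}^{K} c_k λ^{p-k} + O(λ^r) with r < p - K. Then N_b(λ) = Σ_{k=0}^{K} c_k λ^{p-k} + O(λ^{r'}), where r' = max(r, p - 1 - s). -/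
/-!
Since `s > -1`, the shift `δ(λ) = C λ^(-s)` is `o(λ)`. For large `λ` every index satisfies
`b n < λ → a n < λ + δ(λ)` and `a n < λ - δ(λ) → b n < λ`: when `b n` is within a factor `2`
of `λ` this is the bound `|a n - b n| ≤ C₀ (b n)^(-s) ≤ C λ^(-s)`, and otherwise
`|a n - b n| ≤ b n / 2` suffices. Hence `N_a(λ - δ) ≤ N_b(λ) ≤ N_a(λ + δ)`. The expansion of `N_a`
evaluated at `λ ± δ ~ λ` has remainder `O(λ^r)`, and moving the main terms `λ^(p-k)` from `λ ± δ`
back to `λ` costs `O(λ^(p-1) δ) = O(λ^(p-1-s))`.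
-/

open Real Filter Asymptotics Finset
open scoped Topology

lemma isLittleO_rpow_neg_id {s : ℝ} (hs : -1 < s) :
    (fun x : ℝ => x ^ (-s)) =o[atTop] id := by
  refine (isLittleO_iff_tendsto' ?_).2 ?_
  · filter_upwards [eventually_gt_atTop 0] with x hx h
    exact absurd h hx.ne'
  · refine (tendsto_rpow_neg_atTop (by linarith : 0 < 1 + s)).congr' ?_
    filter_upwards [eventually_gt_atTop 0] with x hx
    rw [id, ← rpow_sub_one hx.ne', neg_add', sub_eq_add_neg]
    ring_nf

lemma Asymptotics.IsBigO.of_le_of_le {α : Type*} {l : Filter α} {f u v g : α → ℝ}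
    (hu : u =O[l] g) (hv : v =O[l] g) (huf : u ≤ᶠ[l] f) (hfv : f ≤ᶠ[l] v) : f =O[l] g := by
  have hfu : (f - u) =O[l] g := by
    refine IsBigO.trans ?_ (hv.sub hu)
    refine IsBigO.of_bound' ?_
    filter_upwards [huf, hfv] with x h₁ h₂
    simp only [Pi.sub_apply, norm_eq_abs]
    rw [abs_of_nonneg (by linarith), abs_of_nonneg (by linarith)]
    linarith
  simpa using hfu.add hu

lemma isBigO_rpow_rpow_atTop_of_le {r r' : ℝ} (h : r ≤ r') :
    (fun x : ℝ => x ^ r) =O[atTop] fun x => x ^ r' := by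
  refine IsBigO.of_bound' ?_
  filter_upwards [eventually_ge_atTop 1] with x hx
  rw [norm_of_nonneg (by positivity), norm_of_nonneg (by positivity)]
  exact rpow_le_rpow_of_exponent_le hx h

lemma rpow_add_sub_rpow_isBigO (q : ℝ) {h : ℝ → ℝ} (hh : h =o[atTop] id) :
    (fun x => (x + h x) ^ q - x ^ q) =O[atTop] fun x => x ^ (q - 1) * h x := by
  have hderiv : HasDerivAt (fun u : ℝ => (1 + u) ^ q) (1 * q * (1 + 0) ^ (q - 1)) 0 :=
    ((hasDerivAt_id' 0).const_add 1).rpow_const (Or.inl (by norm_num))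
  have hlin : (fun u : ℝ => (1 + u) ^ q - 1) =O[𝓝 0] fun u => u := by
    simpa using hderiv.isBigO_sub
  have hratio : Tendsto (fun x => h x / x) atTop (𝓝 0) := hh.tendsto_div_nhds_zero
  -- `(x + h x) ^ q - x ^ q = ((1 + h x / x) ^ q - 1) * x ^ q`
  have hcomp := (hlin.comp_tendsto hratio).mul (isBigO_refl (fun x : ℝ => x ^ q) atTop)
  refine hcomp.congr' ?_ ?_
  · filter_upwards [eventually_gt_atTop 0,
      hratio.eventually (eventually_gt_nhds (by norm_num : (-1 : ℝ) < 0))] with x hx hgt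
    simp only [Function.comp_apply]
    rw [sub_mul, one_mul, ← mul_rpow (by linarith) hx.le, add_mul, one_mul,
      div_mul_cancel₀ _ hx.ne', add_comm]
  · filter_upwards [eventually_gt_atTop 0] with x hx
    simp only [Function.comp_apply]
    rw [rpow_sub_one hx.ne']
    ring

lemma sum_rpow_add_sub_sum_rpow_isBigO (K : ℕ) (c : ℕ → ℝ) (p : ℝ) {h : ℝ → ℝ}
    (hh : h =o[atTop] id) :
    (fun x => ∑ k ∈ range (K + 1), c k * (x + h x) ^ (p - k) -
      ∑ k ∈ range (K + 1), c k * x ^ (p - k)) =O[atTop] fun x => x ^ (p - 1) * h x := by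
  simp_rw [← sum_sub_distrib, ← mul_sub]
  refine IsBigO.fun_sum fun k _ =>
    ((rpow_add_sub_rpow_isBigO _ hh).const_mul_left (c k)).trans ?_
  refine (IsBigO.of_bound' (f := fun x : ℝ => x ^ (p - k - 1)) ?_).mul (isBigO_refl h _)
  filter_upwards [eventually_ge_atTop 1] with x hx
  rw [norm_of_nonneg (by positivity), norm_of_nonneg (by positivity)]
  exact rpow_le_rpow_of_exponent_le hx (by linarith [k.cast_nonneg (α := ℝ)])

lemma isBigO_rpow_comp_add {E : ℝ → ℝ} {r : ℝ} (hE : E =O[atTop] fun x => x ^ r)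
    {h : ℝ → ℝ} (hh : h =o[atTop] id) :
    (fun x => E (x + h x)) =O[atTop] fun x => x ^ r := by
  have hequiv : (fun x => x + h x) ~[atTop] id := IsEquivalent.refl.add_isLittleO hh
  have htop : Tendsto (fun x => x + h x) atTop atTop :=
    hequiv.symm.tendsto_atTop tendsto_id
  exact (hE.comp_tendsto htop).trans
    (hequiv.isTheta.rpow (htop.eventually_ge_atTop 0) (eventually_ge_atTop 0)).isBigO

lemma isBigO_comp_add_rpow_sub_sum {N : ℝ → ℝ} {s r p : ℝ} (hs : -1 < s) {K : ℕ}
    {c : ℕ → ℝ} (hN : (fun x => N x - ∑ k ∈ range (K + 1), c k * x ^ (p - k)) =O[atTop]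
      fun x => x ^ r) (d : ℝ) :
    (fun x => N (x + d * x ^ (-s)) - ∑ k ∈ range (K + 1), c k * x ^ (p - k)) =O[atTop]
      fun x => x ^ max r (p - 1 - s) := by
  have hshift : (fun x : ℝ => d * x ^ (-s)) =o[atTop] id :=
    (isLittleO_rpow_neg_id hs).const_mul_left d
  have hremainder := (isBigO_rpow_comp_add hN hshift).trans
    (isBigO_rpow_rpow_atTop_of_le (le_max_left r (p - 1 - s)))
  have hmain : (fun x : ℝ => x ^ (p - 1) * (d * x ^ (-s))) =O[atTop]
      fun x => x ^ max r (p - 1 - s) := by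
    refine IsBigO.trans ?_ (isBigO_rpow_rpow_atTop_of_le (le_max_right r (p - 1 - s)))
    refine (isBigO_const_mul_self d (fun x : ℝ => x ^ (p - 1 - s)) atTop).congr' ?_ .rfl
    filter_upwards [eventually_gt_atTop 0] with x hx
    rw [sub_eq_add_neg (p - 1), rpow_add hx]
    ring
  exact (hremainder.add ((sum_rpow_add_sub_sum_rpow_isBigO K c p hshift).trans hmain)).congr_left
    fun x => by ring

lemma rpow_le_two_rpow_abs_mul_rpow {x y : ℝ} (t : ℝ) (hx : 0 < x) (hy₁ : x / 2 ≤ y)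
    (hy₂ : y ≤ 2 * x) : y ^ t ≤ 2 ^ |t| * x ^ t := by
  rcases le_total 0 t with ht | ht
  · calc y ^ t ≤ (2 * x) ^ t := rpow_le_rpow (by linarith) hy₂ ht
      _ = 2 ^ t * x ^ t := mul_rpow (by norm_num) hx.le
      _ ≤ 2 ^ |t| * x ^ t := by gcongr; exacts [one_le_two, le_abs_self t]
  · calc y ^ t ≤ (x / 2) ^ t := rpow_le_rpow_of_nonpos (by positivity) hy₁ ht
      _ = 2 ^ (-t) * x ^ t := by
        rw [div_rpow hx.le zero_le_two, rpow_neg zero_le_two, div_eq_inv_mul]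
      _ ≤ 2 ^ |t| * x ^ t := by gcongr; exacts [one_le_two, neg_le_abs t]

lemma lt_add_rpow_and_lt_of_lt_sub_rpow {x y C s μ : ℝ} (hy : 0 < y) (hμ : 0 < μ) (hC : 0 ≤ C)
    (hxy : |x - y| ≤ C * y ^ (-s)) (hxy' : |x - y| ≤ y / 2) :
    (y < μ → x < μ + C * 2 ^ |s| * μ ^ (-s)) ∧ (x < μ - C * 2 ^ |s| * μ ^ (-s) → y < μ) := by
  have hnear : μ / 2 ≤ y → y ≤ 2 * μ → |x - y| ≤ C * 2 ^ |s| * μ ^ (-s) := fun h₁ h₂ => by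
    refine hxy.trans ?_
    rw [mul_assoc, ← abs_neg s]
    exact mul_le_mul_of_nonneg_left (rpow_le_two_rpow_abs_mul_rpow _ hμ h₁ h₂) hC
  have hδ : 0 ≤ C * 2 ^ |s| * μ ^ (-s) := by positivity
  obtain ⟨hlo, hhi⟩ := abs_le.mp hxy'
  constructor
  · intro hyμ
    rcases lt_or_ge y (μ / 2) with hsmall | hbig
    · linarith
    · linarith [(abs_le.mp (hnear hbig (by linarith))).2]
  · intro hxμ
    by_contra! hμy
    rcases lt_or_ge (2 * μ) y with hbig | hsmall
    · linarith
    · linarith [(abs_le.mp (hnear (by linarith) hsmall)).1]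

lemma exists_eventually_lt_add_rpow_and_lt_of_lt_sub_rpow {a b : ℕ → ℝ} {s : ℝ} (hs : -1 < s)
    (hb : Tendsto b atTop atTop) (hab : (fun n => a n - b n) =O[atTop] fun n => b n ^ (-s)) :
    ∃ C, ∀ᶠ μ in atTop, ∀ n,
      (b n < μ → a n < μ + C * μ ^ (-s)) ∧ (a n < μ - C * μ ^ (-s) → b n < μ) := by
  obtain ⟨C₀, hC₀, hbound⟩ := hab.exists_pos
  have hsmall := (hab.trans_isLittleO ((isLittleO_rpow_neg_id hs).comp_tendsto hb)).def
    (by norm_num : (0 : ℝ) < 1 / 2)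
  have hgood : ∀ᶠ n in cofinite, 0 < b n ∧ |a n - b n| ≤ C₀ * b n ^ (-s) ∧
      |a n - b n| ≤ b n / 2 := by
    rw [Nat.cofinite_eq_atTop]
    filter_upwards [hb.eventually_gt_atTop 0, hbound.bound, hsmall] with n hpos h₁ h₂
    simp only [Function.comp_apply, id, norm_eq_abs, abs_of_pos hpos,
      abs_of_pos (rpow_pos_of_pos hpos _)] at h₁ h₂
    exact ⟨hpos, h₁, by linarith⟩
  refine ⟨C₀ * 2 ^ |s|, ?_⟩
  filter_upwards [eventually_gt_atTop 0, (eventually_cofinite.mp hgood).eventually_all.mpr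
    fun n _ => eventually_gt_atTop (max (a n) (b n))] with μ hμ hbad n
  by_cases hn : 0 < b n ∧ |a n - b n| ≤ C₀ * b n ^ (-s) ∧ |a n - b n| ≤ b n / 2
  · exact lt_add_rpow_and_lt_of_lt_sub_rpow hn.1 hμ hC₀.le hn.2.1 hn.2.2
  · obtain ⟨ha, hb⟩ := max_lt_iff.mp (hbad n hn)
    have : 0 ≤ C₀ * 2 ^ |s| * μ ^ (-s) := by positivity
    exact ⟨fun _ => by linarith, fun _ => hb⟩

lemma finite_setOf_lt_of_tendsto_atTop {a : ℕ → ℝ} (ha : Tendsto a atTop atTop) (μ : ℝ) :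
    {n | a n < μ}.Finite := by
  have h : ∀ᶠ n in cofinite, μ ≤ a n := by
    rw [Nat.cofinite_eq_atTop]
    exact ha.eventually_ge_atTop μ
  simpa only [not_le] using eventually_cofinite.mp h

lemma card_setOf_lt_le_card_setOf_lt {a b : ℕ → ℝ} (ha : Tendsto a atTop atTop) {μ ν : ℝ}
    (h : ∀ n, b n < μ → a n < ν) : Nat.card {n | b n < μ} ≤ Nat.card {n | a n < ν} :=
  Nat.card_mono (finite_setOf_lt_of_tendsto_atTop ha ν) h

theorem stmt7_general (a b : ℕ → ℝ) (s : ℝ) (hs : -1 < s)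
    (ha_top : Tendsto a atTop atTop) (hb_top : Tendsto b atTop atTop)
    (hclose : (fun n => a n - b n) =O[atTop] fun n => (b n) ^ (-s))
    (Na Nb : ℝ → ℕ)
    (hNa : ∀ lam, Na lam = Nat.card {n : ℕ | a n < lam})
    (hNb : ∀ lam, Nb lam = Nat.card {n : ℕ | b n < lam})
    (p r : ℝ) (K : ℕ) (c : ℕ → ℝ)
    (hasymp : (fun lam => (Na lam : ℝ) -
        ∑ k ∈ Finset.range (K + 1), c k * lam ^ (p - k)) =O[atTop]
      fun lam => lam ^ r) :
    (fun lam => (Nb lam : ℝ) -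
        ∑ k ∈ Finset.range (K + 1), c k * lam ^ (p - k)) =O[atTop]
      fun lam => lam ^ (max r (p - 1 - s)) := by
  obtain ⟨C, hC⟩ := exists_eventually_lt_add_rpow_and_lt_of_lt_sub_rpow hs hb_top hclose
  refine (isBigO_comp_add_rpow_sub_sum hs hasymp (-C)).of_le_of_le
    (isBigO_comp_add_rpow_sub_sum hs hasymp C) ?_ ?_
  · filter_upwards [hC] with lam hlam
    rw [hNa, hNb, neg_mul, ← sub_eq_add_neg]
    gcongr
    exact card_setOf_lt_le_card_setOf_lt hb_top fun n => (hlam n).2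
  · filter_upwards [hC] with lam hlam
    rw [hNa, hNb]
    gcongr
    exact card_setOf_lt_le_card_setOf_lt ha_top fun n => (hlam n).1

theorem stmt7 (a b : ℕ → ℝ) (s : ℝ) (hs : -1 < s)
    (ha_pos : ∀ n, 0 < a n) (hb_pos : ∀ n, 0 < b n)
    (ha_top : Tendsto a atTop atTop) (hb_top : Tendsto b atTop atTop)
    (hclose : (fun n => a n - b n) =O[atTop] fun n => (b n) ^ (-s))
    (Na Nb : ℝ → ℕ)
    (hNa : ∀ lam, Na lam = Nat.card {n : ℕ | a n < lam})
    (hNb : ∀ lam, Nb lam = Nat.card {n : ℕ | b n < lam})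
    (p r : ℝ) (K : ℕ) (c : ℕ → ℝ) (hr : r < p - K)
    (hasymp : (fun lam => (Na lam : ℝ) -
        ∑ k ∈ Finset.range (K + 1), c k * lam ^ (p - k)) =O[atTop]
      fun lam => lam ^ r) :
    (fun lam => (Nb lam : ℝ) -
        ∑ k ∈ Finset.range (K + 1), c k * lam ^ (p - k)) =O[atTop]
      fun lam => lam ^ (max r (p - 1 - s)) :=
  stmt7_general a b s hs ha_top hb_top hclose Na Nb hNa hNb p r K c hasymp
end

section
/- G_{2,1} := ∫_0^{π/2} arccot(csc θ) · sin θ dθ = (√2 - 1)π/2. -/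
/-!
Integrating by parts against `sin θ = (-cos θ)'` turns the integrand (for `θ > 0`,
`arccot (1 / sin θ) = arctan (sin θ)`) into `cos² θ / (1 + sin² θ) = 2 / (1 + sin² θ) - 1`,
whose primitive `√2 · arctan (√2 tan θ) - θ` is rewritten as
`√2 · arcsin (√2 sin θ / √(1 + sin² θ)) - θ` so that it stays continuous at `θ = π / 2`.
Evaluating at the endpoints gives `√2 · π / 2 - π / 2`.
-/

open Real

/-- The principal inverse cotangent, with values in `(0, π)`. -/
noncomputable def arccot (x : ℝ) : ℝ := π / 2 - Real.arctan x

-- Since `1 / 0 = 0`, `arccot (1 / 0) = π / 2 ≠ arctan 0`; the factor `x` absorbs the discrepancy.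
theorem arccot_one_div_mul_self {x : ℝ} (hx : 0 ≤ x) : arccot (1 / x) * x = arctan x * x := by
  rcases hx.eq_or_lt with rfl | hx
  · simp
  · rw [arccot, one_div, arctan_inv_of_pos hx]
    ring

theorem hasDerivAt_arcsin_sqrt_two_mul_div_sqrt_one_add_sq {x : ℝ} (hx : x ^ 2 < 1) :
    HasDerivAt (fun x => arcsin (√2 * x / √(1 + x ^ 2)))
      (√2 / ((1 + x ^ 2) * √(1 - x ^ 2))) x := by
  have hv : 0 < 1 + x ^ 2 := by positivity
  have hv2 : √(1 + x ^ 2) ^ 2 = 1 + x ^ 2 := sq_sqrt hv.le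
  have h2 : √2 ^ 2 = 2 := sq_sqrt zero_le_two
  have hu : HasDerivAt (fun x => √2 * x / √(1 + x ^ 2))
      ((√2 * 1 * √(1 + x ^ 2) - √2 * x * (1 / (2 * √(1 + x ^ 2)) * (2 * x))) /
        √(1 + x ^ 2) ^ 2) x := by
    have := ((hasDerivAt_id x).pow 2).const_add 1
    simp only [id, Nat.cast_ofNat] at this
    exact ((hasDerivAt_id x).const_mul √2).div ((hasDerivAt_sqrt hv.ne').comp x
      (by simpa [mul_comm] using this)) (sqrt_pos.2 hv).ne'
  have hu2 : 1 - (√2 * x / √(1 + x ^ 2)) ^ 2 = (1 - x ^ 2) / (1 + x ^ 2) := by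
    rw [div_pow, mul_pow, h2, hv2]
    field_simp
    ring
  have hu_lt : (√2 * x / √(1 + x ^ 2)) ^ 2 < 1 := by
    have : 0 < (1 - x ^ 2) / (1 + x ^ 2) := div_pos (by linarith) hv
    linarith
  have habs := abs_lt.1 ((sq_lt_one_iff_abs_lt_one _).1 hu_lt)
  refine ((hasDerivAt_arcsin (by linarith [habs.1]) (by linarith [habs.2])).comp x hu).congr_deriv ?_
  rw [hu2, sqrt_div' _ hv.le]
  have hw : 0 < √(1 - x ^ 2) := sqrt_pos.2 (by linarith)
  field_simp
  linear_combination x ^ 2 * hv2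

noncomputable def primitiveArctanSinMulSin (θ : ℝ) : ℝ :=
  -cos θ * arctan (sin θ) + √2 * arcsin (√2 * sin θ / √(1 + sin θ ^ 2)) - θ

theorem continuous_primitiveArctanSinMulSin : Continuous primitiveArctanSinMulSin := by
  unfold primitiveArctanSinMulSin
  fun_prop (disch := intro; positivity)

theorem hasDerivAt_primitiveArctanSinMulSin {θ : ℝ} (hc : 0 < cos θ) :
    HasDerivAt primitiveArctanSinMulSin (arctan (sin θ) * sin θ) θ := by
  have hpyth := sin_sq_add_cos_sq θ
  have hsqrt : √(1 - sin θ ^ 2) = cos θ := by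
    rw [← cos_sq', sqrt_sq hc.le]
  have hs : sin θ ^ 2 < 1 := by nlinarith
  have hv : 0 < 1 + sin θ ^ 2 := by positivity
  have h2 : √2 ^ 2 = 2 := sq_sqrt zero_le_two
  have hcos_arctan := (hasDerivAt_cos θ).neg.mul (hasDerivAt_sin θ).arctan
  have harcsin := ((hasDerivAt_arcsin_sqrt_two_mul_div_sqrt_one_add_sq hs).comp θ
    (hasDerivAt_sin θ)).const_mul √2
  refine ((hcos_arctan.add harcsin).sub (hasDerivAt_id θ)).congr_deriv ?_
  simp only [Pi.neg_apply, hsqrt]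
  field_simp
  linear_combination h2 - hpyth

theorem integral_arctan_sin_mul_sin :
    ∫ θ in (0 : ℝ)..(π / 2), arctan (sin θ) * sin θ = (√2 - 1) * π / 2 := by
  have hderiv : ∀ θ ∈ Set.Ioo 0 (π / 2),
      HasDerivAt primitiveArctanSinMulSin (arctan (sin θ) * sin θ) θ := fun θ hθ =>
    hasDerivAt_primitiveArctanSinMulSin (cos_pos_of_mem_Ioo ⟨by linarith [hθ.1, pi_pos], hθ.2⟩)
  rw [intervalIntegral.integral_eq_sub_of_hasDerivAt_of_le (by positivity)
    continuous_primitiveArctanSinMulSin.continuousOn hderiv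
    (Continuous.intervalIntegrable (by fun_prop) _ _)]
  have hs2 : √2 ≠ 0 := by positivity
  simp only [primitiveArctanSinMulSin, sin_pi_div_two, cos_pi_div_two, sin_zero, cos_zero]
  norm_num [div_self hs2]
  ring

theorem stmt8 :
    ∫ θ in (0:ℝ)..(π / 2), arccot (1 / Real.sin θ) * Real.sin θ
      = (Real.sqrt 2 - 1) * π / 2 := by
  rw [← integral_arctan_sin_mul_sin]
  refine intervalIntegral.integral_congr fun θ hθ => arccot_one_div_mul_self ?_
  rw [Set.uIcc_of_le (by positivity)] at hθ
  exact sin_nonneg_of_nonneg_of_le_pi hθ.1 (by linarith [hθ.2, pi_pos])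
end

section
/- G_{3,1} := ∫_0^{π/2} ∫_0^{π/2} arccot(csc θ₁ · csc θ₂) · sin θ₁ · sin² θ₂ dθ₁ dθ₂ = (π - 2)π/8. -/
/-!
For positive arguments `arccot (1 / (sin θ₁ sin θ₂)) = arctan (sin θ₁ sin θ₂)`, so with `s = sin θ₂`
the inner integral is `∫₀^{π/2} arctan (s sin a) sin a da = π (√(1 + s²) - 1) / (2 s)`, found from an
explicit primitive. The outer integral then becomes
`(π / 2) ∫₀^{π/2} (sin b √(1 + sin² b) - sin b) db = (π / 2) (1 / 2 + π / 4 - 1)`,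
where the first term is `∫₀^1 √(2 - u²) du` after `u = cos b`.
-/

open Real

lemma arccot_inv_of_pos {x : ℝ} (hx : 0 < x) : arccot x⁻¹ = arctan x := by
  rw [arccot, arctan_inv_of_pos hx]
  ring

lemma cos_sq_add_mul_sin_sq_pos {r : ℝ} (hr : 0 < r) (a : ℝ) : 0 < cos a ^ 2 + r * sin a ^ 2 := by
  rcases eq_or_ne (sin a) 0 with h | h
  · nlinarith [sin_sq_add_cos_sq a]
  · positivity

/-- A branch of `arctan (r * tan a)` that is smooth on all of `ℝ`: by the tangent addition formula
it equals `arctan (r * tan a)` on `(-π / 2, π / 2)`. -/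
noncomputable def arctanMulTan (r a : ℝ) : ℝ :=
  a + arctan ((r - 1) * (sin a * cos a) / (cos a ^ 2 + r * sin a ^ 2))

lemma hasDerivAt_arctanMulTan {r : ℝ} (hr : 0 < r) (a : ℝ) :
    HasDerivAt (arctanMulTan r) (r / (cos a ^ 2 + r ^ 2 * sin a ^ 2)) a := by
  have hD := cos_sq_add_mul_sin_sq_pos hr a
  have hD' := cos_sq_add_mul_sin_sq_pos (pow_pos hr 2) a
  have hN := ((hasDerivAt_sin a).mul (hasDerivAt_cos a)).const_mul (r - 1)
  have hDer := ((hasDerivAt_cos a).pow 2).add (((hasDerivAt_sin a).pow 2).const_mul r)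
  apply ((hasDerivAt_id a).add ((hasDerivAt_arctan _).comp a (hN.div hDer hD.ne'))).congr_deriv
  simp only [Pi.mul_apply, Pi.add_apply, Pi.pow_apply, Pi.div_apply]
  field_simp
  linear_combination
    (sin a ^ 2 + cos a ^ 2) * (r * cos a ^ 2 + r ^ 3 * sin a ^ 2) * sin_sq_add_cos_sq a

noncomputable def arctanSinPrimitive (s a : ℝ) : ℝ :=
  -cos a * arctan (s * sin a) + √(1 + s ^ 2) / s * arctanMulTan √(1 + s ^ 2) a - a / s

lemma hasDerivAt_arctanSinPrimitive {s : ℝ} (hs : s ≠ 0) (a : ℝ) :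
    HasDerivAt (arctanSinPrimitive s) (arctan (s * sin a) * sin a) a := by
  have hr : 0 < √(1 + s ^ 2) := sqrt_pos.mpr (by positivity)
  have hr2 : √(1 + s ^ 2) ^ 2 = 1 + s ^ 2 := sq_sqrt (by positivity)
  have harctan := (hasDerivAt_arctan _).comp a ((hasDerivAt_sin a).const_mul s)
  apply ((((hasDerivAt_cos a).neg.mul harctan).add
    ((hasDerivAt_arctanMulTan hr a).const_mul (√(1 + s ^ 2) / s))).sub
    ((hasDerivAt_id a).div_const s)).congr_deriv
  have h1 : cos a ^ 2 + √(1 + s ^ 2) ^ 2 * sin a ^ 2 = 1 + (s * sin a) ^ 2 := by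
    rw [hr2]; linear_combination sin_sq_add_cos_sq a
  simp only [Pi.neg_apply, Function.comp_apply, h1]
  field_simp
  linear_combination hr2 - s ^ 2 * sin_sq_add_cos_sq a

lemma integral_arctan_mul_sin_mul_sin {s : ℝ} (hs : s ≠ 0) :
    ∫ a in (0:ℝ)..(π / 2), arctan (s * sin a) * sin a = π / (2 * s) * (√(1 + s ^ 2) - 1) := by
  rw [intervalIntegral.integral_eq_sub_of_hasDerivAt
    (fun a _ => hasDerivAt_arctanSinPrimitive hs a)
    ((by fun_prop : Continuous _).intervalIntegrable _ _)]
  simp only [arctanSinPrimitive, cos_pi_div_two, neg_zero, sin_pi_div_two, mul_one, zero_mul,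
    arctanMulTan, mul_zero, ne_eq, OfNat.ofNat_ne_zero, not_false_eq_true, zero_pow, one_pow,
    zero_add, zero_div, arctan_zero, add_zero, cos_zero, sin_zero, div_one, sub_self, sub_zero]
  field_simp

noncomputable def sinMulSqrtPrimitive (b : ℝ) : ℝ :=
  -(cos b * √(1 + sin b ^ 2) / 2 + arcsin (cos b / √2))

lemma hasDerivAt_sinMulSqrtPrimitive (b : ℝ) :
    HasDerivAt sinMulSqrtPrimitive (sin b * √(1 + sin b ^ 2)) b := by
  have hw2 : √(1 + sin b ^ 2) ^ 2 = 1 + sin b ^ 2 := sq_sqrt (by positivity)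
  have h2 : (0:ℝ) < √2 := by positivity
  have h22 : √2 ^ 2 = 2 := sq_sqrt (by norm_num)
  have hcos_lt : |cos b / √2| < 1 := by
    rw [abs_div, abs_of_pos h2, div_lt_one h2]
    exact (abs_cos_le_one b).trans_lt (by norm_num [one_lt_sqrt_two])
  have hsqrt := (hasDerivAt_sqrt (x := 1 + sin b ^ 2) (by positivity)).comp b
    (((hasDerivAt_sin b).pow 2).const_add 1)
  have harcsin := (hasDerivAt_arcsin (abs_lt.mp hcos_lt).1.ne' (abs_lt.mp hcos_lt).2.ne).comp b
    ((hasDerivAt_cos b).div_const √2)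
  have hkey : √(1 - (cos b / √2) ^ 2) = √(1 + sin b ^ 2) / √2 := by
    rw [← sqrt_div (by positivity), div_pow, h22]
    congr 1
    field_simp
    linear_combination -sin_sq_add_cos_sq b
  apply ((((hasDerivAt_cos b).mul hsqrt).div_const 2).add harcsin).neg.congr_deriv
  simp only [Function.comp_apply, Pi.pow_apply, hkey]
  field_simp
  linear_combination (-2 * sin b) * hw2 - 2 * sin b * sin_sq_add_cos_sq b

lemma arcsin_inv_sqrt_two : arcsin (√2)⁻¹ = π / 4 := by
  have h : (√2)⁻¹ = sin (π / 4) := by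
    rw [sin_pi_div_four]
    field_simp
    simp
  rw [h, arcsin_sin (by linarith [pi_pos]) (by linarith [pi_pos])]

lemma integral_sin_mul_sqrt_one_add_sin_sq :
    ∫ b in (0:ℝ)..(π / 2), sin b * √(1 + sin b ^ 2) = 1 / 2 + π / 4 := by
  rw [intervalIntegral.integral_eq_sub_of_hasDerivAt
    (fun b _ => hasDerivAt_sinMulSqrtPrimitive b)
    ((by fun_prop : Continuous _).intervalIntegrable _ _)]
  simp [sinMulSqrtPrimitive, arcsin_inv_sqrt_two]

lemma sin_pos_of_mem_uIoc_zero_pi_div_two {x : ℝ} (hx : x ∈ Set.uIoc 0 (π / 2)) : 0 < sin x := by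
  rw [Set.uIoc_of_le (by positivity)] at hx
  exact sin_pos_of_pos_of_lt_pi hx.1 (by linarith [pi_pos, hx.2])

theorem stmt9 :
    ∫ θ₂ in (0:ℝ)..(π / 2), ∫ θ₁ in (0:ℝ)..(π / 2),
        arccot ((1 / Real.sin θ₁) * (1 / Real.sin θ₂)) *
          Real.sin θ₁ * (Real.sin θ₂) ^ 2
      = (π - 2) * π / 8 := by
  have inner : ∀ b ∈ Set.uIoc 0 (π / 2), (∫ a in (0:ℝ)..(π / 2),
      arccot ((1 / sin a) * (1 / sin b)) * sin a * sin b ^ 2)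
        = π / 2 * (sin b * √(1 + sin b ^ 2) - sin b) := by
    intro b hb
    have hsb := sin_pos_of_mem_uIoc_zero_pi_div_two hb
    calc _ = ∫ a in (0:ℝ)..(π / 2), arctan (sin b * sin a) * sin a * sin b ^ 2 := by
          refine intervalIntegral.integral_congr_ae (.of_forall fun a ha => ?_)
          rw [one_div_mul_one_div, one_div, mul_comm (sin b),
            arccot_inv_of_pos (mul_pos (sin_pos_of_mem_uIoc_zero_pi_div_two ha) hsb)]
      _ = _ := by
          rw [intervalIntegral.integral_mul_const, integral_arctan_mul_sin_mul_sin hsb.ne']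
          field_simp
  rw [intervalIntegral.integral_congr_ae (.of_forall inner), intervalIntegral.integral_const_mul,
    intervalIntegral.integral_sub ((by fun_prop : Continuous _).intervalIntegrable _ _)
      intervalIntegral.intervalIntegrable_sin, integral_sin_mul_sqrt_one_add_sin_sq, integral_sin,
    cos_zero, cos_pi_div_two]
  ring
end

section
/- Fix σ₁ > 0 and L > 0. The function g(α) = L − (1/α)·arccot(σ₁/α) is strictly increasing on [σ₁, ∞). In particular, its derivative g'(α) = arccot(σ₁/α)/α² − σ₁/(α³(1 + σ₁²/α²)) is positive for α ≥ σ₁. -/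
open Real

theorem hasDerivAt_arccot (x : ℝ) : HasDerivAt arccot (-(1 + x ^ 2)⁻¹) x :=
  (Real.hasDerivAt_arctan' x).const_sub (π / 2)

theorem pi_div_four_le_arccot {t : ℝ} (ht : t ≤ 1) : π / 4 ≤ arccot t := by
  have : arctan t ≤ π / 4 := arctan_one ▸ arctan_strictMono.monotone ht
  unfold arccot
  linarith

/-- `t / (1 + t²) ≤ 1/2` always, while `arccot t ≥ π/4 > 1/2` once `t ≤ 1`. -/
theorem div_one_add_sq_lt_arccot {t : ℝ} (ht : t ≤ 1) : t / (1 + t ^ 2) < arccot t := by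
  have hhalf : t / (1 + t ^ 2) ≤ 1 / 2 := by
    rw [div_le_iff₀ (by positivity)]
    nlinarith [sq_nonneg (t - 1)]
  linarith [pi_div_four_le_arccot ht, pi_gt_three]

theorem hasDerivAt_const_sub_inv_mul_arccot_div (L c : ℝ) {x : ℝ} (hx : x ≠ 0) :
    HasDerivAt (fun α => L - (1 / α) * arccot (c / α))
      (arccot (c / x) / x ^ 2 - c / (x ^ 3 * (1 + c ^ 2 / x ^ 2))) x := by
  have hinv : HasDerivAt (fun α : ℝ => 1 / α) (-(x ^ 2)⁻¹) x := by
    simpa only [one_div] using hasDerivAt_inv hx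
  have hdiv : HasDerivAt (fun α : ℝ => c / α) (-c / x ^ 2) x := by
    simpa only [mul_one_div, neg_div, mul_neg, ← div_eq_mul_inv] using hinv.const_mul c
  have harccot := (hasDerivAt_arccot (c / x)).comp x hdiv
  refine ((hinv.mul harccot).const_sub L).congr_deriv ?_
  simp only [Function.comp_apply]
  field_simp
  ring

theorem arccot_div_sq_sub_pos {σ α : ℝ} (hσ : 0 < σ) (hα : σ ≤ α) :
    0 < arccot (σ / α) / α ^ 2 - σ / (α ^ 3 * (1 + σ ^ 2 / α ^ 2)) := by
  have hα0 : 0 < α := hσ.trans_le hα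
  have hrewrite : arccot (σ / α) / α ^ 2 - σ / (α ^ 3 * (1 + σ ^ 2 / α ^ 2))
      = (arccot (σ / α) - σ / α / (1 + (σ / α) ^ 2)) / α ^ 2 := by
    field_simp
  rw [hrewrite]
  exact div_pos (sub_pos.2 (div_one_add_sq_lt_arccot ((div_le_one hα0).2 hα))) (by positivity)

theorem stmt16_general (σ₁ L : ℝ) (hσ₁ : 0 < σ₁) :
    StrictMonoOn (fun α => L - (1 / α) * arccot (σ₁ / α)) (Set.Ici σ₁) ∧
    ∀ α, σ₁ ≤ α →
      0 < arccot (σ₁ / α) / α ^ 2 - σ₁ / (α ^ 3 * (1 + σ₁ ^ 2 / α ^ 2)) := by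
  have hderiv (x : ℝ) (hx : σ₁ ≤ x) :=
    hasDerivAt_const_sub_inv_mul_arccot_div L σ₁ (hσ₁.trans_le hx).ne'
  have hpos (α : ℝ) (hα : σ₁ ≤ α) := arccot_div_sq_sub_pos hσ₁ hα
  refine ⟨strictMonoOn_of_deriv_pos (convex_Ici σ₁) ?_ ?_, hpos⟩
  · exact fun x hx => (hderiv x hx).continuousAt.continuousWithinAt
  · intro x hx
    rw [interior_Ici] at hx
    rw [(hderiv x hx.le).deriv]
    exact hpos x hx.le

theorem stmt16 (σ₁ L : ℝ) (hσ₁ : 0 < σ₁) (hL : 0 < L) :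
    StrictMonoOn (fun α => L - (1 / α) * arccot (σ₁ / α)) (Set.Ici σ₁) ∧
    ∀ α, σ₁ ≤ α →
      0 < arccot (σ₁ / α) / α ^ 2 - σ₁ / (α ^ 3 * (1 + σ₁ ^ 2 / α ^ 2)) :=
  stmt16_general σ₁ L hσ₁
end

section
/- Let f_p(x) = arccot(c·(1 + Σ_{j≠p} (x_j/x_p)²)^{1/2}) for x in the open positive orthant of ℝ^p and c > 0, and let ψ: ℝ^p → ℝ^p be a bounded function. Then |f_p(x + ψ(x)) − f_p(x)| = O(|x|^{-1}) as |x| → ∞ (for x with x + ψ(x) remaining in the positive orthant). -/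
/-!
Since `1 + ∑_{j ≠ i} (x_j / x_i)² = (‖x‖ / x_i)²` and `arccot t = arctan t⁻¹` for `t > 0`, the
function is `f x = arctan (x_i / (c ‖x‖))`, an arctangent of a coordinate of the unit vector
`x / ‖x‖`. Both `arctan` and coordinates are `1`-Lipschitz, while `x ↦ x / ‖x‖` moves by at most
`2 ‖ψ x‖ / ‖x‖` under the perturbation `x ↦ x + ψ x`.
-/

open Real Finset

theorem Real.lipschitzWith_arctan : LipschitzWith 1 arctan := by
  refine lipschitzWith_of_nnnorm_deriv_le differentiable_arctan fun x => ?_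
  rw [← NNReal.coe_le_coe, coe_nnnorm, deriv_arctan, norm_div, norm_one, NNReal.coe_one,
    Real.norm_of_nonneg (by positivity), div_le_one (by positivity)]
  nlinarith [sq_nonneg x]

theorem Real.abs_arctan_sub_arctan_le (a b : ℝ) : |arctan a - arctan b| ≤ |a - b| := by
  simpa [Real.dist_eq] using lipschitzWith_arctan.dist_le_mul a b

theorem arccot_eq_arctan_inv {t : ℝ} (ht : 0 < t) : arccot t = arctan t⁻¹ :=
  (arctan_inv_of_pos ht).symm

namespace NormedSpace

variable {V : Type*} [NormedAddCommGroup V] [NormedSpace ℝ V]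

theorem norm_normalize_le (y : V) : ‖normalize y‖ ≤ 1 := by
  by_cases hy : y = 0
  · simp [hy]
  · exact (norm_normalize hy).le

theorem norm_normalize_sub_normalize_le {x : V} (hx : x ≠ 0) (y : V) :
    ‖normalize x - normalize y‖ ≤ 2 * ‖x - y‖ / ‖x‖ := by
  have hx' : 0 < ‖x‖ := norm_pos_iff.mpr hx
  -- `‖y‖ • normalize y = y` also holds for `y = 0`, so no case split is needed.
  have hsplit : normalize x - normalize y = ‖x‖⁻¹ • ((x - y) + (‖y‖ - ‖x‖) • normalize y) := by
    rw [smul_add, sub_smul, norm_smul_normalize, smul_sub, smul_sub, smul_smul,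
      inv_mul_cancel₀ hx'.ne', one_smul, normalize]
    abel
  have hnum : ‖(x - y) + (‖y‖ - ‖x‖) • normalize y‖ ≤ 2 * ‖x - y‖ :=
    calc ‖(x - y) + (‖y‖ - ‖x‖) • normalize y‖
        ≤ ‖x - y‖ + |‖y‖ - ‖x‖| * ‖normalize y‖ := by
          rw [← Real.norm_eq_abs, ← norm_smul]; exact norm_add_le _ _
      _ ≤ ‖x - y‖ + ‖x - y‖ * 1 := by
          gcongr
          · rw [abs_sub_comm]; exact abs_norm_sub_norm_le x y
          · exact norm_normalize_le y
      _ = 2 * ‖x - y‖ := by ring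
  rw [hsplit, norm_smul, norm_inv, norm_norm, inv_mul_eq_div]
  gcongr

end NormedSpace

theorem EuclideanSpace.one_add_sum_erase_div_sq {ι : Type*} [Fintype ι] [DecidableEq ι]
    (x : EuclideanSpace ℝ ι) {i : ι} (hi : x i ≠ 0) :
    1 + ∑ j ∈ univ.erase i, (x j / x i) ^ 2 = (‖x‖ / x i) ^ 2 := by
  have hsum : ‖x‖ ^ 2 = x i ^ 2 + ∑ j ∈ univ.erase i, x j ^ 2 := by
    rw [EuclideanSpace.norm_sq_eq, ← add_sum_erase _ _ (mem_univ i)]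
    simp only [Real.norm_eq_abs, sq_abs]
  simp only [div_pow, ← sum_div, hsum]
  field_simp

theorem arccot_mul_sqrt_eq_arctan {ι : Type*} [Fintype ι] [DecidableEq ι] {c : ℝ} (hc : 0 < c)
    (x : EuclideanSpace ℝ ι) {i : ι} (hi : 0 < x i) :
    arccot (c * √(1 + ∑ j ∈ univ.erase i, (x j / x i) ^ 2))
      = arctan (c⁻¹ * NormedSpace.normalize x i) := by
  have hx : 0 < ‖x‖ := hi.trans_le ((le_abs_self _).trans (PiLp.norm_apply_le x i))
  rw [EuclideanSpace.one_add_sum_erase_div_sq x hi.ne', sqrt_sq (by positivity),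
    arccot_eq_arctan_inv (by positivity), NormedSpace.normalize, PiLp.smul_apply, smul_eq_mul]
  congr 1
  field_simp

theorem stmt19_general (p : ℕ) (i : Fin p) (c : ℝ) (hc : 0 < c)
    (f : EuclideanSpace ℝ (Fin p) → ℝ)
    (hf : f = fun x => arccot (c * Real.sqrt
      (1 + ∑ j ∈ Finset.univ.erase i, (x j / x i) ^ 2)))
    (ψ : EuclideanSpace ℝ (Fin p) → EuclideanSpace ℝ (Fin p))
    (hψ : ∃ M : ℝ, ∀ x, ‖ψ x‖ ≤ M) :
    ∃ C R : ℝ, 0 < C ∧ ∀ x : EuclideanSpace ℝ (Fin p),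
      (∀ j, 0 < x j) → (∀ j, 0 < (x + ψ x) j) → R ≤ ‖x‖ →
      |f (x + ψ x) - f x| ≤ C / ‖x‖ := by
  obtain ⟨M, hM⟩ := hψ
  refine ⟨2 * max M 1 / c, 0, by positivity, fun x hx hxψ _ => ?_⟩
  have hx0 : x ≠ 0 := fun h => by simpa [h] using hx i
  subst hf
  dsimp only
  rw [arccot_mul_sqrt_eq_arctan hc _ (hxψ i), arccot_mul_sqrt_eq_arctan hc _ (hx i)]
  calc |arctan (c⁻¹ * NormedSpace.normalize (x + ψ x) i)
        - arctan (c⁻¹ * NormedSpace.normalize x i)|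
      ≤ c⁻¹ * |(NormedSpace.normalize x - NormedSpace.normalize (x + ψ x)) i| := by
        refine (abs_arctan_sub_arctan_le _ _).trans_eq ?_
        rw [← mul_sub, abs_mul, abs_inv, abs_of_pos hc, abs_sub_comm, PiLp.sub_apply]
    _ ≤ c⁻¹ * (2 * ‖x - (x + ψ x)‖ / ‖x‖) := by
        gcongr
        exact (PiLp.norm_apply_le _ i).trans (NormedSpace.norm_normalize_sub_normalize_le hx0 _)
    _ ≤ c⁻¹ * (2 * max M 1 / ‖x‖) := by
        rw [sub_add_cancel_left, norm_neg]
        gcongr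
        exact (hM x).trans (le_max_left M 1)
    _ = 2 * max M 1 / c / ‖x‖ := by ring

theorem stmt19 (p : ℕ) (hp : 0 < p) (i : Fin p) (c : ℝ) (hc : 0 < c)
    (f : EuclideanSpace ℝ (Fin p) → ℝ)
    (hf : f = fun x => arccot (c * Real.sqrt
      (1 + ∑ j ∈ Finset.univ.erase i, (x j / x i) ^ 2)))
    (ψ : EuclideanSpace ℝ (Fin p) → EuclideanSpace ℝ (Fin p))
    (hψ : ∃ M : ℝ, ∀ x, ‖ψ x‖ ≤ M) :
    ∃ C R : ℝ, 0 < C ∧ ∀ x : EuclideanSpace ℝ (Fin p),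
      (∀ j, 0 < x j) → (∀ j, 0 < (x + ψ x) j) → R ≤ ‖x‖ →
      |f (x + ψ x) - f x| ≤ C / ‖x‖ :=
  stmt19_general p i c hc f hf ψ hψ
end
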